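/- Let p be a prime, 1 ≤ m ≤ n, and let F : ℤ_p^n → ℤ_p^m be a compatible function. Then F is measure-preserving (i.e., μ_p^{⊗n}(F^{−1}(A)) = μ_p^{⊗m}(A) for every measurable A ⊆ ℤ_p^m) if and only if F is balanced modulo p^k for every k = 1, 2, 3, … -/

import Mathlib

open MeasureTheory Filter

/-- Borel measurable structure on the `p`-adic integers. -/
noncomputable instance padicMS (p : ℕ) [Fact p.Prime] : MeasurableSpace ℤ_[p] := borel _

instance padicBS (p : ℕ) [Fact p.Prime] : BorelSpace ℤ_[p] := ⟨rfl⟩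

/-- The Haar measure `μ_p` on `ℤ_p`, normalized so that `μ_p(ℤ_p) = 1`. -/
noncomputable def padicHaar (p : ℕ) [Fact p.Prime] : Measure ℤ_[p] :=
  Measure.addHaarMeasure (⊤ : TopologicalSpace.PositiveCompacts ℤ_[p])

/-- The map `f̄_k : ℤ/p^kℤ → ℤ/p^kℤ` induced by `f : ℤ_p → ℤ_p` via reduction
modulo `p^k` (well-defined whenever `f` is compatible, i.e. 1-Lipschitz). -/
noncomputable def modMap (p : ℕ) [Fact p.Prime] (f : ℤ_[p] → ℤ_[p]) (k : ℕ) :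
    ZMod (p ^ k) → ZMod (p ^ k) :=
  fun z => PadicInt.toZModPow k (f ((z.val : ℕ) : ℤ_[p]))

/-- The map `F̄_k : (ℤ/p^kℤ)^n → (ℤ/p^kℤ)^m` induced by `F : ℤ_p^n → ℤ_p^m` via
coordinatewise reduction modulo `p^k` (well-defined whenever `F` is compatible). -/
noncomputable def modMapV (p : ℕ) [Fact p.Prime] {n m : ℕ}
    (F : (Fin n → ℤ_[p]) → (Fin m → ℤ_[p])) (k : ℕ) :
    (Fin n → ZMod (p ^ k)) → (Fin m → ZMod (p ^ k)) :=
  fun v i => PadicInt.toZModPow k (F (fun j => ((v j).val : ℤ_[p])) i)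

/-- The sphere `S_{p^{-r}}(y) = {z : ‖z - y‖ = p^{-r}}` in `ℤ_p`. -/
def padicSphere (p : ℕ) [Fact p.Prime] (y : ℤ_[p]) (r : ℕ) : Set ℤ_[p] :=
  {z : ℤ_[p] | ‖z - y‖ = (p : ℝ) ^ (-(r : ℤ))}

/-- The probability measure on the sphere `S_{p^{-r}}(y)`, obtained by restricting the
normalized Haar measure `μ_p` to the sphere and normalizing. -/
noncomputable def sphereMeasure (p : ℕ) [Fact p.Prime] (y : ℤ_[p]) (r : ℕ) : Measure ℤ_[p] :=
  (padicHaar p (padicSphere p y r))⁻¹ • (padicHaar p).restrict (padicSphere p y r)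

/-- `f` is ergodic on the sphere `S_{p^{-r}}(y)`: it maps the sphere into itself, preserves
the normalized restriction of the Haar measure to the sphere, and every invariant
measurable subset of the sphere has normalized measure `0` or `1`. -/
def ErgodicOnSphere (p : ℕ) [Fact p.Prime] (f : ℤ_[p] → ℤ_[p]) (y : ℤ_[p]) (r : ℕ) : Prop :=
  Set.MapsTo f (padicSphere p y r) (padicSphere p y r) ∧
  (∀ A : Set ℤ_[p], MeasurableSet A →
      sphereMeasure p y r (f ⁻¹' A) = sphereMeasure p y r A) ∧
  (∀ A : Set ℤ_[p], MeasurableSet A → A ⊆ padicSphere p y r →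
      f ⁻¹' A ∩ padicSphere p y r = A →
      sphereMeasure p y r A = 0 ∨ sphereMeasure p y r A = 1)

/-- `d ∈ ℤ_p` is primitive modulo `p²`: its image in `ℤ/p²ℤ` generates the whole
group of units `(ℤ/p²ℤ)ˣ`. -/
def PrimitiveModSq (p : ℕ) [Fact p.Prime] (d : ℤ_[p]) : Prop :=
  ∃ u : (ZMod (p ^ 2))ˣ, (u : ZMod (p ^ 2)) = PadicInt.toZModPow 2 d ∧
    ∀ v : (ZMod (p ^ 2))ˣ, v ∈ Subgroup.zpowers u

/-! For a compatible `F`, the reduction of `F x` modulo `p^k` depends only on the reduction of `x`,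
so the preimage under `F` of the cylinder `{y | y ≡ v mod p^k}` is the union of the cylinders over
the fibre of `F̄_k` above `v`. A cylinder of level `k` in `ℤ_p^n` has Haar measure `p^{-kn}`, hence
`F` preserves the measure of the cylinder above `v` exactly when that fibre has `p^{k(n-m)}`
elements. Cylinders are the closed balls of radius `p^{-k}`; those of level `k ≥ 1` form a
π-system generating the Borel σ-algebra, so agreement on them already forces `F_* μ = μ`. -/

open scoped ENNReal

namespace PadicInt

variable {p : ℕ} [Fact p.Prime]

theorem toZModPow_eq_iff_norm_sub_le (k : ℕ) (x y : ℤ_[p]) :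
    toZModPow k x = toZModPow k y ↔ ‖x - y‖ ≤ (p : ℝ) ^ (-(k : ℤ)) := by
  rw [← sub_eq_zero, ← map_sub, ← RingHom.mem_ker, ker_toZModPow,
    ← norm_le_pow_iff_mem_span_pow]

theorem toZModPow_surjective (k : ℕ) : Function.Surjective (toZModPow (p := p) k) :=
  ZMod.ringHom_surjective _

theorem preimage_toZModPow_singleton (k : ℕ) (a : ℤ_[p]) :
    toZModPow k ⁻¹' {toZModPow k a} = Metric.closedBall a ((p : ℝ) ^ (-(k : ℤ))) := by
  ext x
  simp [toZModPow_eq_iff_norm_sub_le, dist_eq_norm]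

theorem measurableSet_preimage_toZModPow_singleton (k : ℕ) (c : ZMod (p ^ k)) :
    MeasurableSet (toZModPow k ⁻¹' {c} : Set ℤ_[p]) := by
  obtain ⟨a, rfl⟩ := toZModPow_surjective k c
  rw [preimage_toZModPow_singleton]
  exact Metric.isClosed_closedBall.measurableSet

end PadicInt

open PadicInt

instance (p : ℕ) [Fact p.Prime] : (padicHaar p).IsAddHaarMeasure := by
  unfold padicHaar; infer_instance

instance (p : ℕ) [Fact p.Prime] : IsProbabilityMeasure (padicHaar p) :=
  ⟨by rw [padicHaar, ← TopologicalSpace.PositiveCompacts.coe_top, Measure.addHaarMeasure_self]⟩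

theorem padicHaar_preimage_toZModPow_singleton (p : ℕ) [Fact p.Prime] (k : ℕ) (c : ZMod (p ^ k)) :
    padicHaar p (toZModPow k ⁻¹' {c}) = ((p : ℝ≥0∞) ^ k)⁻¹ := by
  set H := (toZModPow (p := p) k).toAddMonoidHom.ker
  have hindex : H.index = p ^ k := by
    rw [AddSubgroup.index_ker, AddMonoidHom.range_eq_top.2 (toZModPow_surjective k)]
    simp
  have hH : padicHaar p H * p ^ k = 1 := by
    have := H.index_mul_measure (measurableSet_preimage_toZModPow_singleton k 0) (padicHaar p)
    rw [hindex, measure_univ, mul_comm] at this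
    exact_mod_cast this
  obtain ⟨a, rfl⟩ := toZModPow_surjective k c
  have htranslate : toZModPow k ⁻¹' {toZModPow k a} = (fun x => -a + x) ⁻¹' H := by
    ext x
    simp only [H, Set.mem_preimage, Set.mem_singleton_iff, SetLike.mem_coe, AddMonoidHom.mem_ker,
      RingHom.toAddMonoidHom_eq_coe, AddMonoidHom.coe_coe, map_add, map_neg, neg_add_eq_zero]
    exact eq_comm
  rw [htranslate, measure_preimage_add]
  exact ENNReal.eq_inv_of_mul_eq_one_left hH

noncomputable def piToZModPow (p : ℕ) [Fact p.Prime] {ι : Type*} (k : ℕ) (x : ι → ℤ_[p]) :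
    ι → ZMod (p ^ k) :=
  fun i => toZModPow k (x i)

section piToZModPow

variable {p : ℕ} [Fact p.Prime] {ι : Type*}

theorem piToZModPow_surjective (k : ℕ) : Function.Surjective (piToZModPow p (ι := ι) k) :=
  fun v => ⟨fun i => (toZModPow_surjective k (v i)).choose,
    funext fun i => (toZModPow_surjective k (v i)).choose_spec⟩

theorem preimage_piToZModPow_singleton_eq_pi (k : ℕ) (v : ι → ZMod (p ^ k)) :
    piToZModPow p k ⁻¹' {v} = Set.univ.pi fun i => toZModPow k ⁻¹' {v i} := by
  ext x
  simp [piToZModPow, funext_iff]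

theorem measurableSet_preimage_piToZModPow_singleton [Countable ι] (k : ℕ) (v : ι → ZMod (p ^ k)) :
    MeasurableSet (piToZModPow p k ⁻¹' {v}) := by
  rw [preimage_piToZModPow_singleton_eq_pi]
  exact .univ_pi fun i => measurableSet_preimage_toZModPow_singleton k (v i)

variable [Fintype ι]

theorem piToZModPow_eq_iff_norm_sub_le (k : ℕ) (x y : ι → ℤ_[p]) :
    piToZModPow p k x = piToZModPow p k y ↔ ‖x - y‖ ≤ (p : ℝ) ^ (-(k : ℤ)) := by
  rw [pi_norm_le_iff_of_nonneg (by positivity), funext_iff]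
  simp [piToZModPow, toZModPow_eq_iff_norm_sub_le]

theorem preimage_piToZModPow_singleton (k : ℕ) (x : ι → ℤ_[p]) :
    piToZModPow p k ⁻¹' {piToZModPow p k x} = Metric.closedBall x ((p : ℝ) ^ (-(k : ℤ))) := by
  ext y
  simp [piToZModPow_eq_iff_norm_sub_le, dist_eq_norm]

theorem pi_padicHaar_preimage_piToZModPow_singleton (k : ℕ) (v : ι → ZMod (p ^ k)) :
    Measure.pi (fun _ : ι => padicHaar p) (piToZModPow p k ⁻¹' {v}) =
      ((p : ℝ≥0∞) ^ k)⁻¹ ^ Fintype.card ι := by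
  simp [preimage_piToZModPow_singleton_eq_pi, Measure.pi_pi, padicHaar_preimage_toZModPow_singleton]

theorem pi_padicHaar_preimage_piToZModPow (k : ℕ) (s : Finset (ι → ZMod (p ^ k))) :
    Measure.pi (fun _ : ι => padicHaar p) (piToZModPow p k ⁻¹' s) =
      s.card * ((p : ℝ≥0∞) ^ k)⁻¹ ^ Fintype.card ι := by
  rw [← Set.biUnion_preimage_singleton]
  simp_rw [Finset.mem_coe]
  rw [measure_biUnion_finset]
  · simp [pi_padicHaar_preimage_piToZModPow_singleton]
  · exact fun v _ w _ hvw => (Set.disjoint_singleton.2 hvw).preimage _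
  · exact fun v _ => measurableSet_preimage_piToZModPow_singleton k v

end piToZModPow

section Compatible

variable {p n m : ℕ} [Fact p.Prime] {F : (Fin n → ℤ_[p]) → (Fin m → ℤ_[p])}

theorem piToZModPow_apply_of_norm_sub_le (hF : ∀ x y : Fin n → ℤ_[p], ‖F x - F y‖ ≤ ‖x - y‖)
    (k : ℕ) (x : Fin n → ℤ_[p]) :
    piToZModPow p k (F x) = modMapV p F k (piToZModPow p k x) := by
  -- `modMapV` evaluates `F` at the lift `x'` of the reduction of `x`
  set x' : Fin n → ℤ_[p] := fun j => ((piToZModPow p k x j).val : ℤ_[p])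
  have hx' : piToZModPow p k x' = piToZModPow p k x := by
    have : NeZero (p ^ k) := ⟨pow_ne_zero _ (Fact.out : p.Prime).ne_zero⟩
    ext j
    simp [x', piToZModPow]
  change piToZModPow p k (F x) = piToZModPow p k (F x')
  rw [piToZModPow_eq_iff_norm_sub_le] at hx' ⊢
  rw [norm_sub_rev] at hx'
  exact (hF x x').trans hx'

theorem pi_padicHaar_preimage_fiber_eq_card_mul
    (hF : ∀ x y : Fin n → ℤ_[p], ‖F x - F y‖ ≤ ‖x - y‖) (k : ℕ) (v : Fin m → ZMod (p ^ k)) :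
    Measure.pi (fun _ : Fin n => padicHaar p) (F ⁻¹' (piToZModPow p k ⁻¹' {v})) =
      Nat.card {w : Fin n → ZMod (p ^ k) // modMapV p F k w = v} * ((p : ℝ≥0∞) ^ k)⁻¹ ^ n := by
  classical
  have hfiber : F ⁻¹' (piToZModPow p k ⁻¹' {v}) =
      piToZModPow p k ⁻¹' ↑(Finset.univ.filter fun w => modMapV p F k w = v) := by
    ext x
    simp [piToZModPow_apply_of_norm_sub_le hF]
  rw [hfiber, pi_padicHaar_preimage_piToZModPow, Fintype.card_fin, Nat.card_eq_fintype_card,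
    Fintype.card_subtype]

end Compatible

def cylinderSets (p : ℕ) [Fact p.Prime] (ι : Type*) : Set (Set (ι → ℤ_[p])) :=
  {s | ∃ (k : ℕ) (v : ι → ZMod (p ^ (k + 1))), s = piToZModPow p (k + 1) ⁻¹' {v}}

section cylinderSets

variable {p : ℕ} [Fact p.Prime] {ι : Type*} [Fintype ι]

theorem exists_eq_closedBall_of_mem_cylinderSets {s : Set (ι → ℤ_[p])} (hs : s ∈ cylinderSets p ι)
    {x : ι → ℤ_[p]} (hx : x ∈ s) : ∃ k : ℕ, s = Metric.closedBall x ((p : ℝ) ^ (-(k + 1 : ℤ))) := by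
  obtain ⟨k, v, rfl⟩ := hs
  rw [Set.mem_preimage, Set.mem_singleton_iff] at hx
  exact ⟨k, by rw [← hx, preimage_piToZModPow_singleton]; push_cast; rfl⟩

theorem isTopologicalBasis_cylinderSets :
    TopologicalSpace.IsTopologicalBasis (cylinderSets p ι) := by
  refine TopologicalSpace.isTopologicalBasis_of_isOpen_of_nhds ?_ fun x u hxu hu => ?_
  · rintro s ⟨k, v, rfl⟩
    obtain ⟨x, rfl⟩ := piToZModPow_surjective (p := p) (ι := ι) (k + 1) v
    rw [preimage_piToZModPow_singleton]
    exact IsUltrametricDist.isOpen_closedBall x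
      (zpow_pos (Nat.cast_pos.2 (Fact.out : p.Prime).pos) _).ne'
  · obtain ⟨ε, hε, hball⟩ := Metric.isOpen_iff.1 hu x hxu
    obtain ⟨k, hk⟩ := PadicInt.exists_pow_neg_lt p hε
    refine ⟨_, ⟨k, _, rfl⟩, rfl, ?_⟩
    rw [preimage_piToZModPow_singleton]
    refine (Metric.closedBall_subset_ball ?_).trans hball
    refine lt_of_le_of_lt (zpow_le_zpow_right₀ ?_ ?_) hk
    · exact_mod_cast (Fact.out : p.Prime).one_lt.le
    · omega

theorem isPiSystem_cylinderSets : IsPiSystem (cylinderSets p ι) := by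
  rintro s hs t ht ⟨x, hxs, hxt⟩
  obtain ⟨k, rfl⟩ := exists_eq_closedBall_of_mem_cylinderSets hs hxs
  obtain ⟨l, rfl⟩ := exists_eq_closedBall_of_mem_cylinderSets ht hxt
  have hp : (1 : ℝ) ≤ p := by exact_mod_cast (Fact.out : p.Prime).one_lt.le
  rcases le_total k l with hkl | hlk
  · rwa [Set.inter_eq_right.2 <|
      Metric.closedBall_subset_closedBall (zpow_le_zpow_right₀ hp (by omega))]
  · rwa [Set.inter_eq_left.2 <|
      Metric.closedBall_subset_closedBall (zpow_le_zpow_right₀ hp (by omega))]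

theorem pi_eq_generateFrom_cylinderSets :
    (MeasurableSpace.pi : MeasurableSpace (ι → ℤ_[p])) = .generateFrom (cylinderSets p ι) := by
  rw [← isTopologicalBasis_cylinderSets.borel_eq_generateFrom,
    BorelSpace.measurable_eq (α := ι → ℤ_[p])]

end cylinderSets

theorem ENNReal.mul_inv_pow_eq_inv_pow_iff {q c : ℝ≥0∞} (hq₀ : q ≠ 0) (hq : q ≠ ∞) {m n : ℕ}
    (hmn : m ≤ n) : c * q⁻¹ ^ n = q⁻¹ ^ m ↔ c = q ^ (n - m) := by
  obtain ⟨d, rfl⟩ := Nat.exists_eq_add_of_le hmn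
  have hqm₀ : q⁻¹ ^ m ≠ 0 := pow_ne_zero _ (ENNReal.inv_ne_zero.2 hq)
  have hqm : q⁻¹ ^ m ≠ ∞ := ENNReal.pow_ne_top (ENNReal.inv_ne_top.2 hq₀)
  rw [Nat.add_sub_cancel_left, pow_add, mul_comm (q⁻¹ ^ m), ← mul_assoc,
    ENNReal.mul_eq_right hqm₀ hqm, ← ENNReal.inv_pow, ← div_eq_mul_inv,
    ENNReal.div_eq_one_iff (pow_ne_zero _ hq₀) (ENNReal.pow_ne_top hq)]

theorem measurePreserving_iff_balanced_mod_general (p n m : ℕ) [Fact p.Prime]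
    (hmn : m ≤ n)
    (F : (Fin n → ℤ_[p]) → (Fin m → ℤ_[p]))
    (hF : ∀ x y : Fin n → ℤ_[p], ‖F x - F y‖ ≤ ‖x - y‖) :
    (∀ A : Set (Fin m → ℤ_[p]), MeasurableSet A →
        (Measure.pi fun _ : Fin n => padicHaar p) (F ⁻¹' A) =
          (Measure.pi fun _ : Fin m => padicHaar p) A) ↔
      ∀ k : ℕ, 1 ≤ k → ∀ v : Fin m → ZMod (p ^ k),
        Nat.card {w : Fin n → ZMod (p ^ k) // modMapV p F k w = v} = p ^ (k * (n - m)) := by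
  have hbalanced (k : ℕ) (v : Fin m → ZMod (p ^ k)) :
      Measure.pi (fun _ => padicHaar p) (F ⁻¹' (piToZModPow p k ⁻¹' {v})) =
        Measure.pi (fun _ => padicHaar p) (piToZModPow p k ⁻¹' {v}) ↔
      Nat.card {w : Fin n → ZMod (p ^ k) // modMapV p F k w = v} = p ^ (k * (n - m)) := by
    rw [pi_padicHaar_preimage_fiber_eq_card_mul hF, pi_padicHaar_preimage_piToZModPow_singleton,
      Fintype.card_fin, ENNReal.mul_inv_pow_eq_inv_pow_iff
        (pow_ne_zero _ (Nat.cast_ne_zero.2 (Fact.out : p.Prime).ne_zero))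
        (ENNReal.pow_ne_top (ENNReal.natCast_ne_top p)) hmn, ← pow_mul]
    exact_mod_cast Iff.rfl
  have hFmeas : Measurable F := (LipschitzWith.of_dist_le_mul (K := 1) fun x y => by
    simpa [dist_eq_norm] using hF x y).continuous.measurable
  refine ⟨fun h k _ v => (hbalanced k v).1 (h _ (measurableSet_preimage_piToZModPow_singleton k v)),
    fun h A hA => ?_⟩
  have hmap : (Measure.pi fun _ => padicHaar p).map F = Measure.pi fun _ => padicHaar p := by
    refine ext_of_generate_finite _ pi_eq_generateFrom_cylinderSets isPiSystem_cylinderSets ?_ ?_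
    · rintro s ⟨k, v, rfl⟩
      rw [Measure.map_apply hFmeas (measurableSet_preimage_piToZModPow_singleton _ v)]
      exact (hbalanced (k + 1) v).2 (h (k + 1) (by omega) v)
    · simp [Measure.map_apply hFmeas MeasurableSet.univ]
  rw [← hmap, Measure.map_apply hFmeas hA]

/-- A compatible function `F : ℤ_p^n → ℤ_p^m` (with `1 ≤ m ≤ n`) is measure-preserving
if and only if it is balanced modulo `p^k` (all fibers of the induced map on
`(ℤ/p^kℤ)^n → (ℤ/p^kℤ)^m` have cardinality `p^{k(n-m)}`) for every `k ≥ 1`. -/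
theorem measurePreserving_iff_balanced_mod (p n m : ℕ) [Fact p.Prime]
    (hm : 1 ≤ m) (hmn : m ≤ n)
    (F : (Fin n → ℤ_[p]) → (Fin m → ℤ_[p]))
    (hF : ∀ x y : Fin n → ℤ_[p], ‖F x - F y‖ ≤ ‖x - y‖) :
    (∀ A : Set (Fin m → ℤ_[p]), MeasurableSet A →
        (Measure.pi fun _ : Fin n => padicHaar p) (F ⁻¹' A) =
          (Measure.pi fun _ : Fin m => padicHaar p) A) ↔
      ∀ k : ℕ, 1 ≤ k → ∀ v : Fin m → ZMod (p ^ k),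
        Nat.card {w : Fin n → ZMod (p ^ k) // modMapV p F k w = v} = p ^ (k * (n - m)) :=
  measurePreserving_iff_balanced_mod_general p n m hmn F hF
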